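/- A point ρ = 1/2 + iτ with τ real is a zero of the Riemann zeta function if and only if Re ∫_0^1 t^{ρ-2} ψ(1/t²) dt = 1/(4|ρ|²), where ψ(x) = ∑_{n=1}^∞ e^{-π n² x}. -/

import Mathlib

open Complex MeasureTheory Set

noncomputable def psi (x : ℝ) : ℝ := ∑' n : ℕ+, Real.exp (-Real.pi * n ^ 2 * x)

/-!
Riemann's second proof of the functional equation writes the completed zeta function as
`Λ(s) = M(s/2) + M((1-s)/2) - 1/s - 1/(1-s)`, where `M(w) = ∫_1^∞ ψ(x) x^(w-1) dx` is entire.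
On the critical line `1 - s = conj s`, so the two Mellin terms are complex conjugates and
`1/s + 1/(1-s) = 1/|s|²`; hence `Λ(s) = 2 Re M((1-s)/2) - 1/|s|²`. The substitution `x = t⁻²`
turns the integral in the statement into `M((1-s)/2) / 2`, and `ζ` and `Λ` have the same zeros
in `Re s > 0`.
-/

open scoped ComplexConjugate

lemma evenKernel_zero_eq_one_add_two_mul_psi {x : ℝ} (hx : 0 < x) :
    HurwitzZeta.evenKernel 0 x = 1 + 2 * psi x := by
  have h := HurwitzZeta.hasSum_nat_cosKernel₀ 0 hx
  simp only [mul_zero, zero_mul, Real.cos_zero, mul_one, QuotientAddGroup.mk_zero] at h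
  rw [psi, tsum_pnat_eq_tsum_succ (f := fun n : ℕ ↦ Real.exp (-Real.pi * n ^ 2 * x)),
    ← tsum_mul_left]
  push_cast
  rw [h.tsum_eq, HurwitzZeta.evenKernel_eq_cosKernel_of_zero]
  ring

namespace WeakFEPair

variable {E : Type*} [NormedAddCommGroup E] [NormedSpace ℂ E] (P : WeakFEPair E)

lemma f_modif_sub_indicator_eq {x : ℝ} (hx : 0 < x) :
    P.f_modif x - (Ioi 1).indicator (fun y ↦ P.f y - P.f₀) x =
      P.ε • (x : ℂ) ^ (-(P.k : ℂ)) • (Ioi 1).indicator (fun y ↦ P.g y - P.g₀) x⁻¹ := by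
  rcases lt_trichotomy x 1 with hx1 | rfl | hx1
  · have hfeq := P.h_feq x⁻¹ (inv_pos.mpr hx)
    rw [one_div, inv_inv] at hfeq
    rw [f_modif, Pi.add_apply, indicator_of_notMem (notMem_Ioi.mpr hx1.le),
      indicator_of_mem (mem_Ioo.mpr ⟨hx, hx1⟩),
      indicator_of_mem (mem_Ioi.mpr ((one_lt_inv₀ hx).mpr hx1)), hfeq, Real.inv_rpow hx.le,
      ← Real.rpow_neg hx.le, ofReal_cpow hx.le, smul_sub, smul_sub, ← mul_smul, ← mul_smul]
    simp
  · simp [f_modif]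
  · rw [f_modif, Pi.add_apply, indicator_of_mem (mem_Ioi.mpr hx1),
      indicator_of_notMem (notMem_Ioo_of_ge hx1.le),
      indicator_of_notMem (notMem_Ioi.mpr (inv_le_one_of_one_le₀ hx1.le))]
    simp

theorem Λ₀_eq_mellin_add_mellin [CompleteSpace E] (s : ℂ) :
    P.Λ₀ s = mellin ((Ioi 1).indicator fun x ↦ P.f x - P.f₀) s +
      P.ε • mellin ((Ioi 1).indicator fun x ↦ P.g x - P.g₀) (P.k - s) := by
  set F := (Ioi 1).indicator fun x ↦ P.f x - P.f₀
  set G := (Ioi 1).indicator fun x ↦ P.g x - P.g₀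
  have hf : MellinConvergent P.f_modif s := (P.isStrongFEPair_toStrongFEPair.hasMellin s).1
  have hF : MellinConvergent F s := by
    have : (fun t : ℝ ↦ (t : ℂ) ^ (s - 1) • F t) =
        (Ioi 1).indicator (fun t : ℝ ↦ (t : ℂ) ^ (s - 1) • P.f_modif t) := by
      ext t
      by_cases ht : 1 < t
      · simp [F, ht, f_modif, notMem_Ioo_of_ge ht.le]
      · simp [F, ht]
    rw [MellinConvergent, this]
    exact hf.indicator measurableSet_Ioi
  have hsplit : mellin P.f_modif s = mellin F s + mellin (fun x ↦ P.f_modif x - F x) s := by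
    have := (hasMellin_add hF (hasMellin_sub hf hF).1).2
    simp only [add_sub_cancel] at this
    exact this
  rw [Λ₀, hsplit]
  congr 1
  calc mellin (fun x ↦ P.f_modif x - F x) s
      = mellin (fun x ↦ P.ε • (x : ℂ) ^ (-(P.k : ℂ)) • G x⁻¹) s :=
        setIntegral_congr_fun measurableSet_Ioi fun x hx ↦ by
          simp only [P.f_modif_sub_indicator_eq hx, F, G]
    _ = P.ε • mellin G (P.k - s) := by
        rw [mellin_const_smul, mellin_cpow_smul, mellin_comp_inv, neg_add, neg_neg, add_comm]
        rfl

end WeakFEPair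

lemma mellin_conj (f : ℝ → ℂ) (s : ℂ) :
    mellin (fun t ↦ conj (f t)) (conj s) = conj (mellin f s) := by
  rw [mellin, mellin, ← integral_conj]
  refine setIntegral_congr_fun measurableSet_Ioi fun t (ht : 0 < t) ↦ ?_
  have harg : (t : ℂ).arg ≠ Real.pi := by
    rw [arg_ofReal_of_nonneg ht.le]
    exact Real.pi_ne_zero.symm
  rw [smul_eq_mul, smul_eq_mul, map_mul, show conj s - 1 = conj (s - 1) by simp,
    cpow_conj _ _ harg, conj_ofReal]

lemma setIntegral_Ioo_cpow_mul_comp_one_div_sq (f : ℝ → ℂ) (s : ℂ) :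
    ∫ t in Ioo (0 : ℝ) 1, (t : ℂ) ^ (s - 2) * f (1 / t ^ 2) =
      mellin ((Ioi 1).indicator f) ((1 - s) / 2) / 2 := by
  have hcomp := mellin_comp_rpow ((Ioi 1).indicator f) (s - 1) (-2)
  rw [show (s - 1) / ((-2 : ℝ) : ℂ) = (1 - s) / 2 by push_cast; ring] at hcomp
  norm_num at hcomp
  rw [div_eq_inv_mul, ← one_div, ← hcomp, mellin,
    setIntegral_eq_of_subset_of_forall_sdiff_eq_zero measurableSet_Ioi Ioo_subset_Ioi_self]
  · refine setIntegral_congr_fun measurableSet_Ioo fun t ⟨ht0, ht1⟩ ↦ ?_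
    have h1 : 1 < (t ^ 2)⁻¹ := (one_lt_inv₀ (by positivity)).mpr (by nlinarith)
    rw [indicator_of_mem (mem_Ioi.mpr h1), smul_eq_mul, one_div, sub_sub]
    norm_num
  · rintro t ⟨ht0 : 0 < t, ht⟩
    have ht1 : 1 ≤ t := not_lt.mp fun h ↦ ht ⟨ht0, h⟩
    rw [indicator_of_notMem (notMem_Ioi.mpr (inv_le_one_of_one_le₀ (one_le_pow₀ ht1))),
      smul_zero]

noncomputable def psiTail : ℝ → ℂ := (Ioi 1).indicator fun x ↦ (psi x : ℂ)

lemma indicator_evenKernel_zero_sub_one :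
    ((Ioi 1).indicator fun x ↦ ((HurwitzZeta.evenKernel 0 x : ℝ) : ℂ) - 1) =
      fun x ↦ (2 : ℂ) • psiTail x := by
  ext x
  by_cases hx : 1 < x
  · simp [psiTail, hx, evenKernel_zero_eq_one_add_two_mul_psi (zero_lt_one.trans hx)]
  · simp [psiTail, hx]

theorem completedRiemannZeta_eq_mellin_psiTail (s : ℂ) :
    completedRiemannZeta s =
      mellin psiTail (s / 2) + mellin psiTail ((1 - s) / 2) - 1 / s - 1 / (1 - s) := by
  have hf := indicator_evenKernel_zero_sub_one
  have hg := HurwitzZeta.evenKernel_eq_cosKernel_of_zero ▸ hf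
  rw [completedRiemannZeta_eq, completedRiemannZeta₀, HurwitzZeta.completedHurwitzZetaEven₀,
    WeakFEPair.Λ₀_eq_mellin_add_mellin]
  simp only [HurwitzZeta.hurwitzEvenFEPair, Function.comp_apply, if_true, hf, hg,
    mellin_const_smul]
  rw [show ((1 / 2 : ℝ) : ℂ) - s / 2 = (1 - s) / 2 by push_cast; ring]
  simp only [smul_eq_mul, one_mul]
  ring

lemma riemannZeta_eq_zero_iff_completedRiemannZeta_eq_zero {s : ℂ} (hs : 0 < s.re) :
    riemannZeta s = 0 ↔ completedRiemannZeta s = 0 := by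
  rw [riemannZeta_def_of_ne_zero (ne_zero_of_re_pos hs), div_eq_zero_iff,
    or_iff_left (Gammaℝ_ne_zero_of_re_pos hs)]

lemma conj_eq_one_sub_of_re_eq_half {s : ℂ} (hs : s.re = 1 / 2) : conj s = 1 - s := by
  apply Complex.ext <;> simp [hs]
  norm_num

lemma one_div_add_one_div_one_sub_of_re_eq_half {s : ℂ} (hs : s.re = 1 / 2) :
    1 / s + 1 / (1 - s) = ((1 / ‖s‖ ^ 2 : ℝ) : ℂ) := by
  have hs0 : s ≠ 0 := ne_zero_of_re_pos (by rw [hs]; norm_num)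
  have hs1 : 1 - s ≠ 0 := ne_zero_of_re_pos (by rw [sub_re, one_re, hs]; norm_num)
  calc 1 / s + 1 / (1 - s) = 1 / (s * conj s) := by
        rw [conj_eq_one_sub_of_re_eq_half hs]
        field_simp
        ring
    _ = ((1 / ‖s‖ ^ 2 : ℝ) : ℂ) := by
        rw [mul_conj, normSq_eq_norm_sq]
        norm_cast

theorem completedRiemannZeta_eq_of_re_eq_half {s : ℂ} (hs : s.re = 1 / 2) :
    completedRiemannZeta s =
      ((2 * (mellin psiTail ((1 - s) / 2)).re - 1 / ‖s‖ ^ 2 : ℝ) : ℂ) := by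
  have hconj : conj ((1 - s) / 2) = s / 2 := by
    rw [map_div₀, map_sub, map_one, conj_eq_one_sub_of_re_eq_half hs, map_ofNat, sub_sub_cancel]
  have hpsi : (fun x ↦ conj (psiTail x)) = psiTail := by
    ext x
    by_cases hx : 1 < x <;> simp [psiTail, hx]
  rw [completedRiemannZeta_eq_mellin_psiTail, sub_sub,
    one_div_add_one_div_one_sub_of_re_eq_half hs, ← hconj, ← hpsi, mellin_conj, hpsi, add_comm,
    add_conj]
  norm_cast

theorem zeta_zero_iff (τ : ℝ) :
    riemannZeta (1 / 2 + I * τ) = 0 ↔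
      (∫ t in Ioo (0 : ℝ) 1, (t : ℂ) ^ ((1 / 2 + I * τ) - 2) * (psi (1 / t ^ 2) : ℝ)).re =
        1 / (4 * ‖(1 / 2 + I * τ : ℂ)‖ ^ 2) := by
  set ρ : ℂ := 1 / 2 + I * τ
  have hρ : ρ.re = 1 / 2 := by simp [ρ]
  have hρ0 : ‖ρ‖ ≠ 0 := norm_ne_zero_iff.mpr (ne_zero_of_re_pos (by rw [hρ]; norm_num))
  rw [riemannZeta_eq_zero_iff_completedRiemannZeta_eq_zero (by rw [hρ]; norm_num),
    completedRiemannZeta_eq_of_re_eq_half hρ, ofReal_eq_zero,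
    setIntegral_Ioo_cpow_mul_comp_one_div_sq (fun x ↦ (psi x : ℂ)), ← psiTail, div_ofNat_re]
  field_simp
  constructor <;> intro h <;> linarith
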